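/- Let π : (X,G) → (Y,G) be a factor map and U a finite open cover of X. If the set P(G,U|π) of subsets S ⊆ G with |S∩F_n| → ∞ along which U has positive relative upper entropy (i.e. limsup_n (1/|F_n∩S|) log N(⋁_{g∈F_n∩S} g^{-1}U | π) > 0) is nonempty, then the supremum of the upper dimensions D̄(S) over S ∈ P(G,U|π) equals 1. -/

import Mathlib

/-!
Every `S ∈ 𝓘(G)` has `D̄(S) ≤ 1`, because `|S ∩ F n| ≤ |F n| → ∞`. For equality, enlarge a given
`S ∈ 𝒫(G, 𝒰 | π)` by annuli `F m_{k+1} \ F n_k`: the `n_k` are times at which the entropy along `S`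
exceeds a fixed `a > 0` and `|S ∩ F n_k| ≥ |F m_k|` dominates everything added before, and
`|F m_{k+1}| ≥ 2 |F n_k|`. At the times `n_k` the enlargement at most doubles `S ∩ F n_k`, while
`N(· | π)` can only grow with the index set, so the entropy along it stays above `a / 2`. At the
times `m_{k+1}` it fills at least half of `F m_{k+1}`, so its upper dimension is `1`.
-/

open Filter Topology Pointwise
open scoped ENNReal

/-- A Følner sequence for a group `G`. -/
def IsFolnerSeq (G : Type*) [Group G] (F : ℕ → Finset G) : Prop :=
  (∀ n, (F n).Nonempty) ∧
    ∀ (K : Finset G) (δ : ℝ), 0 < δ →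
      ∀ᶠ n in atTop,
        ((symmDiff ((K : Set G) * ((F n : Set G))) ((F n : Set G))).ncard : ℝ) <
          δ * ((F n).card : ℝ)

/-- Amenability of a (countable discrete) group via almost invariant finite sets. -/
def IsAmenableGrp (G : Type*) [Group G] : Prop :=
  ∀ K : Finset G, K.Nonempty → ∀ δ : ℝ, 0 < δ →
    ∃ F : Finset G, F.Nonempty ∧
      ((symmDiff ((K : Set G) * (F : Set G)) (F : Set G)).ncard : ℝ) < δ * (F.card : ℝ)

/-- The finite set `A ∩ S`. -/
noncomputable def interF {G : Type*} (A : Finset G) (S : Set G) : Finset G :=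
  @Finset.filter G (fun g => g ∈ S) (Classical.decPred _) A

/-- `S` belongs to `𝓘(G)` : `|S ∩ F n| → ∞`. -/
def InI {G : Type*} (F : ℕ → Finset G) (S : Set G) : Prop :=
  Tendsto (fun n => (interF (F n) S).card) atTop atTop

/-- `D̄(S, α) = limsup_n |S ∩ F n| / |F n|^α`. -/
noncomputable def DbarAt {G : Type*} (F : ℕ → Finset G) (S : Set G) (α : ℝ) : ℝ≥0∞ :=
  atTop.limsup fun n =>
    ((interF (F n) S).card : ℝ≥0∞) / ENNReal.ofReal (((F n).card : ℝ) ^ α)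

/-- `D̲(S, α) = liminf_n |S ∩ F n| / |F n|^α`. -/
noncomputable def DlowAt {G : Type*} (F : ℕ → Finset G) (S : Set G) (α : ℝ) : ℝ≥0∞ :=
  atTop.liminf fun n =>
    ((interF (F n) S).card : ℝ≥0∞) / ENNReal.ofReal (((F n).card : ℝ) ^ α)

/-- The upper dimension `D̄(S)` of a subset `S ⊆ G`. -/
noncomputable def upperDim {G : Type*} (F : ℕ → Finset G) (S : Set G) : ℝ :=
  sInf {α : ℝ | 0 ≤ α ∧ DbarAt F S α = 0}

/-- The lower dimension `D̲(S)` of a subset `S ⊆ G`. -/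
noncomputable def lowerDim {G : Type*} (F : ℕ → Finset G) (S : Set G) : ℝ :=
  sInf {α : ℝ | 0 ≤ α ∧ DlowAt F S α = 0}

/-- A finite open cover of `X`. -/
def IsOpenCover {X : Type*} [TopologicalSpace X] (𝒰 : Set (Set X)) : Prop :=
  𝒰.Finite ∧ (∀ U ∈ 𝒰, IsOpen U) ∧ ⋃₀ 𝒰 = Set.univ

/-- Minimal number of members of `𝒰` needed to cover `E`. -/
noncomputable def coverNum {X : Type*} (𝒰 : Set (Set X)) (E : Set X) : ℕ :=
  sInf {k | ∃ t : Finset (Set X), ↑t ⊆ 𝒰 ∧ t.card = k ∧ E ⊆ ⋃₀ (t : Set (Set X))}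

/-- `N(𝒰 | π) = sup_y` of the covering number of the fiber `π ⁻¹ y`. -/
noncomputable def NRel {X Y : Type*} (𝒰 : Set (Set X)) (π : X → Y) : ℕ :=
  ⨆ y : Y, coverNum 𝒰 (π ⁻¹' {y})

/-- A factor map between `G`-systems. -/
def IsFactorMap (G : Type*) {X Y : Type*} [Group G] [TopologicalSpace X] [TopologicalSpace Y]
    [MulAction G X] [MulAction G Y] (π : X → Y) : Prop :=
  Continuous π ∧ Function.Surjective π ∧ ∀ (g : G) (x : X), π (g • x) = g • π x

/-- The join `⋁_{g ∈ B} g⁻¹ 𝒰`. -/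
def dynJoin {G X : Type*} [Group G] [MulAction G X] (B : Finset G) (𝒰 : Set (Set X)) :
    Set (Set X) :=
  {W | ∃ f : G → Set X, (∀ g ∈ B, f g ∈ 𝒰) ∧ W = ⋂ g ∈ B, (fun x => g • x) ⁻¹' f g}

/-- `h̄(G, 𝒰, α | π)`. -/
noncomputable def hRelU {G X Y : Type*} [Group G] [MulAction G X]
    (F : ℕ → Finset G) (𝒰 : Set (Set X)) (π : X → Y) (α : ℝ) : ℝ≥0∞ :=
  atTop.limsup fun n =>
    ENNReal.ofReal (Real.log (NRel (dynJoin (F n) 𝒰) π)) /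
      ENNReal.ofReal (((F n).card : ℝ) ^ α)

/-- `h̲(G, 𝒰, α | π)`. -/
noncomputable def hRelL {G X Y : Type*} [Group G] [MulAction G X]
    (F : ℕ → Finset G) (𝒰 : Set (Set X)) (π : X → Y) (α : ℝ) : ℝ≥0∞ :=
  atTop.liminf fun n =>
    ENNReal.ofReal (Real.log (NRel (dynJoin (F n) 𝒰) π)) /
      ENNReal.ofReal (((F n).card : ℝ) ^ α)

/-- The relative upper entropy dimension `D̄(G, 𝒰 | π)` of a cover. -/
noncomputable def DU {G X Y : Type*} [Group G] [MulAction G X]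
    (F : ℕ → Finset G) (𝒰 : Set (Set X)) (π : X → Y) : ℝ :=
  sInf {α : ℝ | 0 ≤ α ∧ hRelU F 𝒰 π α = 0}

/-- The relative lower entropy dimension `D̲(G, 𝒰 | π)` of a cover. -/
noncomputable def DL {G X Y : Type*} [Group G] [MulAction G X]
    (F : ℕ → Finset G) (𝒰 : Set (Set X)) (π : X → Y) : ℝ :=
  sInf {α : ℝ | 0 ≤ α ∧ hRelL F 𝒰 π α = 0}

/-- The relative upper entropy dimension `D̄(X, G | π)` of the system. -/
noncomputable def DUSys {G X Y : Type*} [Group G] [TopologicalSpace X] [MulAction G X]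
    (F : ℕ → Finset G) (π : X → Y) : ℝ :=
  sSup {d : ℝ | ∃ 𝒰 : Set (Set X), IsOpenCover 𝒰 ∧ d = DU F 𝒰 π}

/-- The relative lower entropy dimension `D̲(X, G | π)` of the system. -/
noncomputable def DLSys {G X Y : Type*} [Group G] [TopologicalSpace X] [MulAction G X]
    (F : ℕ → Finset G) (π : X → Y) : ℝ :=
  sSup {d : ℝ | ∃ 𝒰 : Set (Set X), IsOpenCover 𝒰 ∧ d = DL F 𝒰 π}

/-- `(1 / |F n ∩ S|) log N(⋁_{g ∈ F n ∩ S} g⁻¹ 𝒰 | π)`. -/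
noncomputable def entAlong {G X Y : Type*} [Group G] [MulAction G X]
    (F : ℕ → Finset G) (S : Set G) (𝒰 : Set (Set X)) (π : X → Y) : ℕ → ℝ≥0∞ :=
  fun n =>
    ENNReal.ofReal (Real.log (NRel (dynJoin (interF (F n) S) 𝒰) π)) /
      ((interF (F n) S).card : ℝ≥0∞)

/-- `S` is a relative entropy generating set of `𝒰` relative to `π`. -/
def IsEntGen {G X Y : Type*} [Group G] [MulAction G X]
    (F : ℕ → Finset G) (S : Set G) (𝒰 : Set (Set X)) (π : X → Y) : Prop :=
  InI F S ∧ 0 < atTop.liminf (entAlong F S 𝒰 π)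

/-- `S ∈ 𝒫(G, 𝒰 | π)` : positive relative upper entropy along `S`. -/
def InP {G X Y : Type*} [Group G] [MulAction G X]
    (F : ℕ → Finset G) (S : Set G) (𝒰 : Set (Set X)) (π : X → Y) : Prop :=
  InI F S ∧ 0 < atTop.limsup (entAlong F S 𝒰 π)

/-- `D̄_e(G, 𝒰 | π)`. -/
noncomputable def DeU {G X Y : Type*} [Group G] [MulAction G X]
    (F : ℕ → Finset G) (𝒰 : Set (Set X)) (π : X → Y) : ℝ :=
  sSup {d : ℝ | ∃ S : Set G, IsEntGen F S 𝒰 π ∧ d = upperDim F S}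

/-- `D̲_e(G, 𝒰 | π)`. -/
noncomputable def DeL {G X Y : Type*} [Group G] [MulAction G X]
    (F : ℕ → Finset G) (𝒰 : Set (Set X)) (π : X → Y) : ℝ :=
  sSup {d : ℝ | ∃ S : Set G, IsEntGen F S 𝒰 π ∧ d = lowerDim F S}

/-- `D̄_p(G, 𝒰 | π)`. -/
noncomputable def DpU {G X Y : Type*} [Group G] [MulAction G X]
    (F : ℕ → Finset G) (𝒰 : Set (Set X)) (π : X → Y) : ℝ :=
  sSup {d : ℝ | ∃ S : Set G, InP F S 𝒰 π ∧ d = upperDim F S}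

/-- `D̲_p(G, 𝒰 | π)`. -/
noncomputable def DpL {G X Y : Type*} [Group G] [MulAction G X]
    (F : ℕ → Finset G) (𝒰 : Set (Set X)) (π : X → Y) : ℝ :=
  sSup {d : ℝ | ∃ S : Set G, InP F S 𝒰 π ∧ d = lowerDim F S}

/-- `D̄_e(X, G | π)`. -/
noncomputable def DeUSys {G X Y : Type*} [Group G] [TopologicalSpace X] [MulAction G X]
    (F : ℕ → Finset G) (π : X → Y) : ℝ :=
  sSup {d : ℝ | ∃ 𝒰 : Set (Set X), IsOpenCover 𝒰 ∧ d = DeU F 𝒰 π}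

/-- `D̲_p(X, G | π)`. -/
noncomputable def DpLSys {G X Y : Type*} [Group G] [TopologicalSpace X] [MulAction G X]
    (F : ℕ → Finset G) (π : X → Y) : ℝ :=
  sSup {d : ℝ | ∃ 𝒰 : Set (Set X), IsOpenCover 𝒰 ∧ d = DpL F 𝒰 π}

/-- The cover `{X ∖ cl B(x i, 1/k) : i}` associated with a tuple. -/
def ballCover {X : Type*} [MetricSpace X] {n : ℕ} (x : Fin n → X) (k : ℕ) : Set (Set X) :=
  {V | ∃ i : Fin n, V = (Metric.closedBall (x i) (1 / (k : ℝ)))ᶜ}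

/-- The relative entropy dimension `D̄(x₁, …, x_n | π)` of a tuple. -/
noncomputable def tupleDim {G X Y : Type*} [Group G] [MetricSpace X] [MulAction G X] {n : ℕ}
    (F : ℕ → Finset G) (x : Fin n → X) (π : X → Y) : ℝ :=
  limUnder atTop fun k : ℕ => DU F (ballCover x k) π

/-- The tuple lies on the diagonal. -/
def IsDiag {X : Type*} {n : ℕ} (x : Fin n → X) : Prop := ∀ i j, x i = x j

/-- The `n`-th relative dimension set `𝒟_n(X, G | π)`. -/
noncomputable def dimSet {G X Z : Type*} [Group G] [MetricSpace X] [MulAction G X]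
    (F : ℕ → Finset G) (π : X → Z) (n : ℕ) : Set ℝ :=
  {α : ℝ | 0 ≤ α ∧ ∃ x : Fin n → X, ¬ IsDiag x ∧ tupleDim F x π = α}

/-- The translated cover `g𝒰`. -/
def smulCover {G X : Type*} [SMul G X] (g : G) (𝒰 : Set (Set X)) : Set (Set X) :=
  (fun U => (fun x => g • x) '' U) '' 𝒰

/-- The join `𝒰 ∨ 𝒱` of two covers. -/
def covJoin {X : Type*} (𝒰 𝒱 : Set (Set X)) : Set (Set X) :=
  {W | ∃ U ∈ 𝒰, ∃ V ∈ 𝒱, W = U ∩ V}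

/-- A standard cover: two non-dense open sets covering `X`. -/
def IsStandardCover {X : Type*} [TopologicalSpace X] (𝒲 : Set (Set X)) : Prop :=
  ∃ U V : Set X, 𝒲 = {U, V} ∧ IsOpen U ∧ IsOpen V ∧ U ∪ V = Set.univ ∧
    ¬ Dense U ∧ ¬ Dense V

section interF

variable {G : Type*}

theorem mem_interF {A : Finset G} {S : Set G} {g : G} : g ∈ interF A S ↔ g ∈ A ∧ g ∈ S :=
  @Finset.mem_filter G (· ∈ S) (Classical.decPred _) A g

theorem interF_subset (A : Finset G) (S : Set G) : interF A S ⊆ A :=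
  @Finset.filter_subset G (· ∈ S) (Classical.decPred _) A

theorem interF_mono (A : Finset G) {S T : Set G} (h : S ⊆ T) : interF A S ⊆ interF A T :=
  fun _ hg => mem_interF.2 ⟨(mem_interF.1 hg).1, h (mem_interF.1 hg).2⟩

theorem InI.tendsto_card {F : ℕ → Finset G} {S : Set G} (hS : InI F S) :
    Tendsto (fun n => (F n).card) atTop atTop :=
  tendsto_atTop_mono (fun n => Finset.card_le_card (interF_subset (F n) S)) hS

theorem InI.mono {F : ℕ → Finset G} {S T : Set G} (hS : InI F S) (hST : S ⊆ T) : InI F T :=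
  tendsto_atTop_mono (fun n => Finset.card_le_card (interF_mono (F n) hST)) hS

end interF

section upperDim

variable {G : Type*} {F : ℕ → Finset G}

theorem DbarAt_eq_zero_of_one_lt (hF : Tendsto (fun n => (F n).card) atTop atTop) (S : Set G)
    {α : ℝ} (hα : 1 < α) : DbarAt F S α = 0 := by
  have hle : ∀ᶠ n in atTop,
      ((interF (F n) S).card : ℝ≥0∞) / ENNReal.ofReal (((F n).card : ℝ) ^ α)
        ≤ ENNReal.ofReal (((F n).card : ℝ) ^ (1 - α)) := by
    filter_upwards [hF.eventually_ge_atTop 1] with n hn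
    have hpos : (0 : ℝ) < (F n).card := by exact_mod_cast hn
    calc ((interF (F n) S).card : ℝ≥0∞) / ENNReal.ofReal (((F n).card : ℝ) ^ α)
        ≤ ENNReal.ofReal (F n).card / ENNReal.ofReal (((F n).card : ℝ) ^ α) := by
          rw [ENNReal.ofReal_natCast]
          gcongr
          exact interF_subset _ _
      _ = ENNReal.ofReal (((F n).card : ℝ) ^ (1 - α)) := by
          rw [← ENNReal.ofReal_div_of_pos (Real.rpow_pos_of_pos hpos α), Real.rpow_sub hpos,
            Real.rpow_one]
  have hlim : Tendsto (fun n => ENNReal.ofReal (((F n).card : ℝ) ^ (1 - α))) atTop (𝓝 0) := by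
    have h := (tendsto_rpow_neg_atTop (by linarith : 0 < α - 1)).comp
      (tendsto_natCast_atTop_atTop.comp hF)
    simpa [Function.comp_def] using ENNReal.tendsto_ofReal h
  exact le_antisymm ((limsup_le_limsup hle).trans hlim.limsup_eq.le) bot_le

theorem upperDim_le_one (hF : Tendsto (fun n => (F n).card) atTop atTop) (S : Set G) :
    upperDim F S ≤ 1 :=
  le_of_forall_pos_le_add fun ε hε => csInf_le ⟨0, fun _ hα => hα.1⟩
    ⟨by linarith, DbarAt_eq_zero_of_one_lt hF S (by linarith)⟩

theorem inv_two_le_DbarAt {S : Set G}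
    (hS : ∃ᶠ n in atTop, (F n).card ≤ 2 * (interF (F n) S).card)
    (hF : Tendsto (fun n => (F n).card) atTop atTop) {α : ℝ} (hα : α ≤ 1) :
    2⁻¹ ≤ DbarAt F S α := by
  refine le_limsup_of_frequently_le ((hS.and_eventually (hF.eventually_ge_atTop 1)).mono ?_)
  rintro n ⟨hdense, hn⟩
  have hn' : (1 : ℝ) ≤ (F n).card := by exact_mod_cast hn
  have hpos : 0 < ENNReal.ofReal (((F n).card : ℝ) ^ α) :=
    ENNReal.ofReal_pos.2 (Real.rpow_pos_of_pos (by linarith) α)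
  rw [ENNReal.le_div_iff_mul_le (Or.inl hpos.ne') (Or.inl ENNReal.ofReal_ne_top),
    ENNReal.inv_mul_le_iff two_ne_zero ENNReal.ofNat_ne_top]
  calc ENNReal.ofReal (((F n).card : ℝ) ^ α) ≤ ENNReal.ofReal (F n).card :=
        ENNReal.ofReal_le_ofReal (by simpa using Real.rpow_le_rpow_of_exponent_le hn' hα)
    _ ≤ 2 * (interF (F n) S).card := by rw [ENNReal.ofReal_natCast]; exact_mod_cast hdense

theorem upperDim_eq_one_of_frequently_dense {S : Set G}
    (hS : ∃ᶠ n in atTop, (F n).card ≤ 2 * (interF (F n) S).card)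
    (hF : Tendsto (fun n => (F n).card) atTop atTop) : upperDim F S = 1 := by
  refine (upperDim_le_one hF S).antisymm
    (le_csInf ⟨2, zero_le_two, DbarAt_eq_zero_of_one_lt hF S one_lt_two⟩ ?_)
  rintro α ⟨-, hα⟩
  by_contra! hlt
  have := inv_two_le_DbarAt hS hF hlt.le
  simp [hα] at this

end upperDim

section coverNum

variable {X : Type*}

theorem coverNum_le_card {𝒱 : Set (Set X)} {E : Set X} {t : Finset (Set X)} (ht : ↑t ⊆ 𝒱)
    (hE : E ⊆ ⋃₀ (t : Set (Set X))) : coverNum 𝒱 E ≤ t.card :=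
  Nat.sInf_le ⟨t, ht, rfl, hE⟩

theorem coverNum_le_of_refines {𝒱 𝒲 : Set (Set X)} {E : Set X}
    (href : ∀ V ∈ 𝒱, ∃ W ∈ 𝒲, V ⊆ W)
    (hE : ∃ t : Finset (Set X), ↑t ⊆ 𝒱 ∧ E ⊆ ⋃₀ (t : Set (Set X))) :
    coverNum 𝒲 E ≤ coverNum 𝒱 E := by
  classical
  have hne : {k | ∃ t : Finset (Set X), ↑t ⊆ 𝒱 ∧ t.card = k ∧ E ⊆ ⋃₀ (t : Set (Set X))}.Nonempty :=
    let ⟨t, ht𝒱, hEt⟩ := hE; ⟨t.card, t, ht𝒱, rfl, hEt⟩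
  obtain ⟨t, ht𝒱, htcard, hEt⟩ := Nat.sInf_mem hne
  choose up hup𝒲 hup using fun V (hV : V ∈ t) => href V (ht𝒱 hV)
  let t' := t.attach.image fun V => up V.1 V.2
  have ht' : ↑t' ⊆ 𝒲 := by
    simp only [t', Finset.coe_image, Set.image_subset_iff]
    exact fun V _ => hup𝒲 V.1 V.2
  have hEt' : E ⊆ ⋃₀ (t' : Set (Set X)) := by
    intro x hx
    obtain ⟨V, hV, hxV⟩ := hEt hx
    exact ⟨up V hV, Finset.mem_image.2 ⟨⟨V, hV⟩, Finset.mem_attach _ _, rfl⟩, hup V hV hxV⟩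
  calc coverNum 𝒲 E ≤ t'.card := coverNum_le_card ht' hEt'
    _ ≤ t.attach.card := Finset.card_image_le
    _ = coverNum 𝒱 E := by rw [Finset.card_attach, htcard, coverNum]

theorem NRel_le_of_refines {Y : Type*} {𝒱 𝒲 : Set (Set X)} (h𝒱 : 𝒱.Finite)
    (hcov : ⋃₀ 𝒱 = Set.univ) (href : ∀ V ∈ 𝒱, ∃ W ∈ 𝒲, V ⊆ W) (π : X → Y) :
    NRel 𝒲 π ≤ NRel 𝒱 π := by
  have hfiber : ∀ y, π ⁻¹' {y} ⊆ ⋃₀ (h𝒱.toFinset : Set (Set X)) := fun y x _ => by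
    rw [Set.Finite.coe_toFinset, hcov]; trivial
  refine ciSup_mono ⟨h𝒱.toFinset.card, ?_⟩ fun y =>
    coverNum_le_of_refines href ⟨h𝒱.toFinset, by simp, hfiber y⟩
  rintro _ ⟨y, rfl⟩
  exact coverNum_le_card (by simp) (hfiber y)

end coverNum

section dynJoin

variable {G X : Type*} [Group G] [MulAction G X]

theorem dynJoin_finite {𝒰 : Set (Set X)} (h𝒰 : 𝒰.Finite) (B : Finset G) :
    (dynJoin B 𝒰).Finite := by
  have := h𝒰.to_subtype
  refine (Set.finite_range fun φ : B → 𝒰 => ⋂ g : B, (fun x => g.1 • x) ⁻¹' φ g).subset ?_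
  rintro _ ⟨f, hf, rfl⟩
  exact ⟨fun g => ⟨f g, hf g g.2⟩, by simp [Set.iInter_subtype]⟩

theorem sUnion_dynJoin {𝒰 : Set (Set X)} (h𝒰 : ⋃₀ 𝒰 = Set.univ) (B : Finset G) :
    ⋃₀ dynJoin B 𝒰 = Set.univ := by
  refine Set.eq_univ_of_forall fun x => ?_
  choose f hf𝒰 hf using fun g : G => Set.mem_sUnion.1 (h𝒰 ▸ Set.mem_univ (g • x))
  exact ⟨_, ⟨f, fun g _ => hf𝒰 g, rfl⟩, Set.mem_iInter₂.2 fun g _ => hf g⟩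

theorem dynJoin_refines_of_subset (𝒰 : Set (Set X)) {B B' : Finset G} (h : B ⊆ B') :
    ∀ V ∈ dynJoin B' 𝒰, ∃ W ∈ dynJoin B 𝒰, V ⊆ W := by
  rintro _ ⟨f, hf, rfl⟩
  exact ⟨_, ⟨f, fun g hg => hf g (h hg), rfl⟩, Set.biInter_subset_biInter_left h⟩

theorem NRel_dynJoin_mono {Y : Type*} {𝒰 : Set (Set X)} (h𝒰 : 𝒰.Finite)
    (hcov : ⋃₀ 𝒰 = Set.univ) (π : X → Y) {B B' : Finset G} (h : B ⊆ B') :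
    NRel (dynJoin B 𝒰) π ≤ NRel (dynJoin B' 𝒰) π :=
  NRel_le_of_refines (dynJoin_finite h𝒰 B') (sUnion_dynJoin hcov B')
    (dynJoin_refines_of_subset 𝒰 h) π

theorem entAlong_div_le {Y : Type*} {F : ℕ → Finset G} {𝒰 : Set (Set X)} (h𝒰 : 𝒰.Finite)
    (hcov : ⋃₀ 𝒰 = Set.univ) (π : X → Y) {S T : Set G} (hST : S ⊆ T) {n c : ℕ}
    (hcard : (interF (F n) T).card ≤ c * (interF (F n) S).card) :
    entAlong F S 𝒰 π n / c ≤ entAlong F T 𝒰 π n := by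
  have hlog : ENNReal.ofReal (Real.log (NRel (dynJoin (interF (F n) S) 𝒰) π)) ≤
      ENNReal.ofReal (Real.log (NRel (dynJoin (interF (F n) T) 𝒰) π)) := by
    have hN := NRel_dynJoin_mono h𝒰 hcov π (interF_mono (F n) hST)
    rcases Nat.eq_zero_or_pos (NRel (dynJoin (interF (F n) S) 𝒰) π) with h0 | hpos
    · simp [h0]
    · exact ENNReal.ofReal_le_ofReal
        (Real.log_le_log (by exact_mod_cast hpos) (by exact_mod_cast hN))
  calc entAlong F S 𝒰 π n / c
      = ENNReal.ofReal (Real.log (NRel (dynJoin (interF (F n) S) 𝒰) π)) /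
          ((interF (F n) S).card * c) := by
        rw [entAlong, div_eq_mul_inv, div_eq_mul_inv, div_eq_mul_inv, mul_assoc,
          ENNReal.mul_inv (Or.inr (ENNReal.natCast_ne_top c)) (Or.inl (ENNReal.natCast_ne_top _))]
    _ ≤ entAlong F T 𝒰 π n := ENNReal.div_le_div hlog (by rw [mul_comm]; exact_mod_cast hcard)

end dynJoin

theorem exists_superset_frequently_dense {G : Type*} {F : ℕ → Finset G} (hF : Monotone F)
    {S : Set G} (hS : InI F S) {p : ℕ → Prop} (hp : ∃ᶠ n in atTop, p n) :
    ∃ T, S ⊆ T ∧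
      (∃ᶠ n in atTop, p n ∧ (interF (F n) T).card ≤ 2 * (interF (F n) S).card) ∧
      ∃ᶠ n in atTop, (F n).card ≤ 2 * (interF (F n) T).card := by
  classical
  have hnext : ∀ k, ∃ n, (k < n ∧ (F k).card ≤ (interF (F n) S).card) ∧ p n := fun k =>
    (((eventually_gt_atTop k).and (hS.eventually_ge_atTop _)).and_frequently hp).exists
  have hfar : ∀ n, ∃ m, n < m ∧ 2 * (F n).card ≤ (F m).card := fun n =>
    ((eventually_gt_atTop n).and (hS.tendsto_card.eventually_ge_atTop _)).exists
  choose next hnext using hnext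
  choose far hfar_gt hfar_card using hfar
  let m : ℕ → ℕ := fun k => Nat.rec 0 (fun _ mk => far (next mk)) k
  let n : ℕ → ℕ := fun k => next (m k)
  have hm_n : ∀ k, m k < n k := fun k => (hnext _).1.1
  have hn_m : ∀ k, n k < m (k + 1) := fun k => hfar_gt _
  have hn_mono : StrictMono n := strictMono_nat_of_lt_succ fun k => (hn_m k).trans (hm_n (k + 1))
  have hm_mono : Monotone m := monotone_nat_of_le_succ fun k => ((hm_n k).trans (hn_m k)).le
  let T := S ∪ ⋃ k, ((F (m (k + 1)) \ F (n k) : Finset G) : Set G)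
  have hmemT : ∀ {g}, g ∈ T ↔ g ∈ S ∨ ∃ k, g ∈ F (m (k + 1)) ∧ g ∉ F (n k) := by
    simp [T]
  refine ⟨T, Set.subset_union_left, frequently_atTop.2 fun a => ?_,
    frequently_atTop.2 fun a => ?_⟩
  · have hsub : interF (F (n a)) T ⊆ interF (F (n a)) S ∪ F (m a) := by
      intro g hg
      obtain ⟨hgF, hgT⟩ := mem_interF.1 hg
      rcases hmemT.1 hgT with hgS | ⟨k, hgk, hgnk⟩
      · exact Finset.mem_union_left _ (mem_interF.2 ⟨hgF, hgS⟩)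
      · have hka : k + 1 ≤ a := by
          by_contra! hak
          exact hgnk (hF (hn_mono.monotone (Nat.le_of_lt_succ hak)) hgF)
        exact Finset.mem_union_right _ (hF (hm_mono hka) hgk)
    refine ⟨n a, hn_mono.le_apply, (hnext _).2, ?_⟩
    calc (interF (F (n a)) T).card ≤ (interF (F (n a)) S).card + (F (m a)).card :=
          (Finset.card_le_card hsub).trans (Finset.card_union_le _ _)
      _ ≤ 2 * (interF (F (n a)) S).card := by linarith [(hnext (m a)).1.2]
  · have hsub : F (m (a + 1)) \ F (n a) ⊆ interF (F (m (a + 1))) T := fun g hg =>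
      mem_interF.2 ⟨(Finset.mem_sdiff.1 hg).1, hmemT.2 (Or.inr ⟨a, Finset.mem_sdiff.1 hg⟩)⟩
    have hannulus := Finset.card_sdiff_of_subset (hF (hn_m a).le)
    refine ⟨m (a + 1), (hn_mono.le_apply).trans (hn_m a).le, ?_⟩
    have hgrow : 2 * (F (n a)).card ≤ (F (m (a + 1))).card := hfar_card _
    have := Finset.card_le_card hsub
    omega

theorem stmt9_general {G X Y : Type*} [Group G]
    [MetricSpace X]
    [MulAction G X]
    (π : X → Y)
    (F : ℕ → Finset G) (hFmono : ∀ n, F n ⊆ F (n + 1))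
    (𝒰 : Set (Set X)) (h𝒰 : IsOpenCover 𝒰)
    (hP : ∃ S : Set G, InP F S 𝒰 π) :
    sSup {d : ℝ | ∃ S : Set G, InP F S 𝒰 π ∧ d = upperDim F S} = 1 := by
  obtain ⟨S, hSI, hSpos⟩ := hP
  obtain ⟨a, ha0, ha⟩ := exists_between hSpos
  obtain ⟨T, hST, hTent, hTdense⟩ := exists_superset_frequently_dense
    (monotone_nat_of_le_succ hFmono) hSI (frequently_lt_of_lt_limsup (by isBoundedDefault) ha)
  have hTP : InP F T 𝒰 π := by
    refine ⟨hSI.mono hST, (ENNReal.div_pos (b := 2) ha0.ne' (by norm_num)).trans_le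
      (le_limsup_of_frequently_le (hTent.mono fun n hn => ?_))⟩
    exact (ENNReal.div_le_div_right hn.1.le 2).trans
      (entAlong_div_le h𝒰.1 h𝒰.2.2 π hST (by exact_mod_cast hn.2))
  have hle : ∀ d ∈ {d : ℝ | ∃ S : Set G, InP F S 𝒰 π ∧ d = upperDim F S}, d ≤ 1 := by
    rintro _ ⟨R, hR, rfl⟩
    exact upperDim_le_one hR.1.tendsto_card R
  exact IsGreatest.csSup_eq
    ⟨⟨T, hTP, (upperDim_eq_one_of_frequently_dense hTdense hSI.tendsto_card).symm⟩, hle⟩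

theorem stmt9 {G X Y : Type*} [Group G] [Countable G]
    [MetricSpace X] [CompactSpace X] [MetricSpace Y] [CompactSpace Y]
    [MulAction G X] [MulAction G Y]
    (hcX : ∀ g : G, Continuous fun x : X => g • x)
    (hcY : ∀ g : G, Continuous fun y : Y => g • y)
    (π : X → Y) (hπ : IsFactorMap G π)
    (F : ℕ → Finset G) (hF : IsFolnerSeq G F) (hFmono : ∀ n, F n ⊆ F (n + 1))
    (𝒰 : Set (Set X)) (h𝒰 : IsOpenCover 𝒰)
    (hP : ∃ S : Set G, InP F S 𝒰 π) :
    sSup {d : ℝ | ∃ S : Set G, InP F S 𝒰 π ∧ d = upperDim F S} = 1 :=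
  stmt9_general π F hFmono 𝒰 h𝒰 hP
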